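/- arXiv:2605.25927 — 6 statements merged into one kernel-verified Lean document; each statement's English description precedes it below -/
import Mathlib

section
/- Let G be a graph with vertices partitioned into V_ℓ and V_f and weights w_ℓ, w_f : V → ℝ≥0. In the bilevel independent set problem with bottleneck objectives for both players and an optimistic follower, the leader's optimal value equals max( max_{v ∈ V_ℓ} w_ℓ(v), max_{v ∈ F*} w_ℓ(v) ), where F* = argmax_{v ∈ V_f} w_f(v), provided V_ℓ and V_f are both nonempty; in particular the problem is solvable by examining only singleton actions. -/
private lemma inf_img_le {V : Type*} (s : Finset V) (g : V → ℝ) {v : V} (hv : v ∈ s) :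
    sInf (g '' ↑s) ≤ g v :=
  csInf_le ((s.finite_toSet.image g).bddBelow) ⟨v, hv, rfl⟩

private lemma le_sup_img {V : Type*} {s : Set V} (hs : s.Finite) (g : V → ℝ) {v : V}
    (hv : v ∈ s) : g v ≤ sSup (g '' s) :=
  le_csSup ((hs.image g).bddAbove) ⟨v, hv, rfl⟩

/-- bilevel independent set with bottleneck objectives for both players
and an optimistic follower.  The leader's optimal value (the greatest leader value
`min_{v ∈ L∪F} w_ℓ(v)` over leader actions `L ⊆ V_ℓ` together with follower-optimal
reactions `F`) equals `max( max_{v∈V_ℓ} w_ℓ v , max_{v ∈ F*} w_ℓ v )`, where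
`F* = argmax_{v∈V_f} w_f v`, provided `V_ℓ` and `V_f` are nonempty. -/
theorem stmt_5 {V : Type*} [Fintype V] [DecidableEq V] (G : SimpleGraph V)
    (Vl Vf : Set V) (hpart : Vl ∪ Vf = Set.univ) (hdis : Disjoint Vl Vf)
    (hVl : Vl.Nonempty) (hVf : Vf.Nonempty)
    (wl wf : V → ℝ) (hwl : ∀ v, 0 ≤ wl v) (hwf : ∀ v, 0 ≤ wf v) :
    IsGreatest
      {x : ℝ | ∃ L F : Finset V, ↑L ⊆ Vl ∧ ↑F ⊆ Vf ∧
        ((↑(L ∪ F) : Set V).Pairwise fun u v => ¬ G.Adj u v) ∧ (L ∪ F).Nonempty ∧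
        (∀ F' : Finset V, ↑F' ⊆ Vf →
          ((↑(L ∪ F') : Set V).Pairwise fun u v => ¬ G.Adj u v) → (L ∪ F').Nonempty →
          sInf (wf '' ↑(L ∪ F')) ≤ sInf (wf '' ↑(L ∪ F))) ∧
        x = sInf (wl '' ↑(L ∪ F))}
      (max (sSup (wl '' Vl)) (sSup (wl '' {v ∈ Vf | ∀ u ∈ Vf, wf u ≤ wf v}))) := by
  have hVlf : Vl.Finite := Set.toFinite _
  have hVff : Vf.Finite := Set.toFinite _
  set Fstar : Set V := {v ∈ Vf | ∀ u ∈ Vf, wf u ≤ wf v} with hFstarDef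
  have hFsf : Fstar.Finite := hVff.subset (fun v hv => hv.1)
  -- sSup over Vl is attained
  obtain ⟨a, haVl, hamem⟩ : ∃ a ∈ Vl, wl a = sSup (wl '' Vl) := by
    obtain ⟨a, ha, he⟩ := (hVl.image wl).csSup_mem (hVlf.image wl)
    exact ⟨a, ha, he⟩
  -- Fstar nonempty
  have hFsne : Fstar.Nonempty := by
    obtain ⟨b0, hb0, hmax⟩ := Set.exists_max_image Vf wf hVff hVf
    exact ⟨b0, hb0, hmax⟩
  -- sSup over Fstar attained
  obtain ⟨b, hbFs, hbmem⟩ : ∃ b ∈ Fstar, wl b = sSup (wl '' Fstar) := by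
    obtain ⟨b, hb, he⟩ := (hFsne.image wl).csSup_mem (hFsf.image wl)
    exact ⟨b, hb, he⟩
  -- membership of A
  have memA : sSup (wl '' Vl) ∈
      {x : ℝ | ∃ L F : Finset V, ↑L ⊆ Vl ∧ ↑F ⊆ Vf ∧
        ((↑(L ∪ F) : Set V).Pairwise fun u v => ¬ G.Adj u v) ∧ (L ∪ F).Nonempty ∧
        (∀ F' : Finset V, ↑F' ⊆ Vf →
          ((↑(L ∪ F') : Set V).Pairwise fun u v => ¬ G.Adj u v) → (L ∪ F').Nonempty →
          sInf (wf '' ↑(L ∪ F')) ≤ sInf (wf '' ↑(L ∪ F))) ∧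
        x = sInf (wl '' ↑(L ∪ F))} := by
    refine ⟨{a}, ∅, by simpa using haVl, by simp, by simp, by simp, ?_, ?_⟩
    · intro F' _ _ _
      have h1 : sInf (wf '' ↑(({a} : Finset V) ∪ F')) ≤ wf a :=
        inf_img_le _ _ (by simp)
      have h2 : sInf (wf '' ↑(({a} : Finset V) ∪ ∅)) = wf a := by simp
      rw [h2]; exact h1
    · simp [hamem]
  -- membership of B
  have memB : sSup (wl '' Fstar) ∈
      {x : ℝ | ∃ L F : Finset V, ↑L ⊆ Vl ∧ ↑F ⊆ Vf ∧
        ((↑(L ∪ F) : Set V).Pairwise fun u v => ¬ G.Adj u v) ∧ (L ∪ F).Nonempty ∧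
        (∀ F' : Finset V, ↑F' ⊆ Vf →
          ((↑(L ∪ F') : Set V).Pairwise fun u v => ¬ G.Adj u v) → (L ∪ F').Nonempty →
          sInf (wf '' ↑(L ∪ F')) ≤ sInf (wf '' ↑(L ∪ F))) ∧
        x = sInf (wl '' ↑(L ∪ F))} := by
    refine ⟨∅, {b}, by simp, by simpa using hbFs.1, by simp, by simp, ?_, ?_⟩
    · intro F' hF' _ hne
      have h2 : sInf (wf '' ↑((∅ : Finset V) ∪ {b})) = wf b := by simp
      rw [h2]
      obtain ⟨u, hu⟩ := hne
      have h1 : sInf (wf '' ↑((∅ : Finset V) ∪ F')) ≤ wf u := inf_img_le _ _ hu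
      refine h1.trans (hbFs.2 u ?_)
      have : u ∈ F' := by simpa using hu
      exact hF' this
    · simp [hbmem]
  constructor
  · rcases max_cases (sSup (wl '' Vl)) (sSup (wl '' Fstar)) with ⟨h, -⟩ | ⟨h, -⟩ <;>
      rw [h]
    · exact memA
    · exact memB
  · rintro x ⟨L, F, hL, hF, hind, hne, hopt, rfl⟩
    rcases L.eq_empty_or_nonempty with hLe | ⟨u, hu⟩
    · -- leader plays nothing: F ⊆ Fstar
      subst hLe
      have hFne : F.Nonempty := by simpa using hne
      obtain ⟨v, hv⟩ := hFne
      have hvFs : v ∈ Fstar := by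
        refine ⟨hF hv, fun u hu => ?_⟩
        have hsing : ((↑((∅ : Finset V) ∪ {u}) : Set V).Pairwise
            fun a b => ¬ G.Adj a b) := by simp
        have := hopt {u} (by simpa using hu) hsing (by simp)
        have h1 : sInf (wf '' ↑((∅ : Finset V) ∪ {u})) = wf u := by simp
        rw [h1] at this
        exact this.trans (inf_img_le _ _ (by simpa using hv))
      calc sInf (wl '' ↑((∅ : Finset V) ∪ F)) ≤ wl v := inf_img_le _ _ (by simpa using hv)
        _ ≤ sSup (wl '' Fstar) := le_sup_img hFsf wl hvFs
        _ ≤ _ := le_max_right _ _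
    · calc sInf (wl '' ↑(L ∪ F)) ≤ wl u := inf_img_le _ _ (Finset.mem_union_left _ hu)
        _ ≤ sSup (wl '' Vl) := le_sup_img hVlf wl (hL hu)
        _ ≤ _ := le_max_left _ _
end

section
/- Let G = (V, E) be a graph and k ≥ 1. Construct G' with leader vertices V_ℓ = { v^i : v ∈ V, i ∈ [k] } where each V^i = { v^i : v ∈ V } forms a clique, and follower vertices V_f = { u_e : e ∈ E }, where v^i is adjacent to u_e iff e is incident to v in G. Then G has a vertex cover of size at most k if and only if there exists an independent set L ⊆ V_ℓ of G' such that every vertex in V_f has a neighbor in L. -/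
/-- The graph `G'` of the vertex-cover reduction: leader vertices `V × Fin k`
(where each copy `V^i = V × {i}` forms a clique) and follower vertices `u_e`
for the edges `e` of the base graph `H`, with `v^i` adjacent to `u_e` iff
`e` is incident to `v` in `H`. -/
def redGraph {V : Type*} (H : SimpleGraph V) (k : ℕ) :
    SimpleGraph ((V × Fin k) ⊕ H.edgeSet) :=
  SimpleGraph.fromRel fun x y =>
    match x, y with
    | Sum.inl p, Sum.inl q => p.2 = q.2
    | Sum.inl p, Sum.inr e => p.1 ∈ (e : Sym2 V)
    | _, _ => False

/-- `H` has a vertex cover of size at most `k` iff in the reduced graph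
there is an independent set `L` of leader vertices such that every follower vertex
(edge vertex) has a neighbor in `L`. -/
theorem stmt_6 {V : Type*} [Fintype V] [DecidableEq V] (H : SimpleGraph V)
    (k : ℕ) (hk : 1 ≤ k) :
    (∃ S : Finset V, S.card ≤ k ∧ ∀ e ∈ H.edgeSet, ∃ v ∈ S, v ∈ e) ↔
    (∃ L : Finset (V × Fin k),
      (((fun p => (Sum.inl p : (V × Fin k) ⊕ H.edgeSet)) '' ↑L).Pairwise
        fun u v => ¬ (redGraph H k).Adj u v) ∧
      ∀ e : H.edgeSet, ∃ p ∈ L, (redGraph H k).Adj (Sum.inl p) (Sum.inr e)) := by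
  constructor
  · rintro ⟨S, hS, hcov⟩
    have hcard : Fintype.card ↥S ≤ Fintype.card (Fin k) := by simpa using hS
    obtain ⟨f⟩ : Nonempty (↥S ↪ Fin k) := Function.Embedding.nonempty_of_card_le hcard
    refine ⟨S.attach.image (fun v : ↥S => (v.1, f v)), ?_, ?_⟩
    · intro x hx y hy hxy
      simp only [Set.mem_image, Finset.mem_coe, Finset.mem_image,
        Finset.mem_attach, true_and] at hx hy
      obtain ⟨p, ⟨a, rfl⟩, rfl⟩ := hx
      obtain ⟨q, ⟨b, rfl⟩, rfl⟩ := hy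
      rw [redGraph, SimpleGraph.fromRel_adj]
      rintro ⟨hne, h | h⟩ <;> simp only at h <;>
        exact hxy (by rw [f.injective h])
    · intro e
      obtain ⟨v, hv, hve⟩ := hcov e e.2
      refine ⟨(v, f ⟨v, hv⟩), ?_, ?_⟩
      · exact Finset.mem_image.mpr ⟨⟨v, hv⟩, Finset.mem_attach _ _, rfl⟩
      · rw [redGraph, SimpleGraph.fromRel_adj]
        exact ⟨by simp, Or.inl hve⟩
  · rintro ⟨L, hind, hcov⟩
    refine ⟨L.image Prod.fst, ?_, ?_⟩
    · have hinj : Set.InjOn (fun p : V × Fin k => p.2) (↑L : Set (V × Fin k)) := by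
        intro p hp q hq h
        by_contra hne
        have := hind ⟨p, hp, rfl⟩ ⟨q, hq, rfl⟩ (by simp [hne])
        exact this (by rw [redGraph, SimpleGraph.fromRel_adj]; exact ⟨by simp [hne], Or.inl h⟩)
      calc (L.image Prod.fst).card ≤ L.card := Finset.card_image_le
        _ = (L.image Prod.snd).card := (Finset.card_image_of_injOn hinj).symm
        _ ≤ k := by simpa using Finset.card_le_univ (L.image Prod.snd)
    · intro e he
      obtain ⟨p, hp, hadj⟩ := hcov ⟨e, he⟩
      refine ⟨p.1, Finset.mem_image_of_mem _ hp, ?_⟩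
      rw [redGraph, SimpleGraph.fromRel_adj] at hadj
      rcases hadj.2 with h | h
      · exact h
      · exact h.elim
end

section
/- Let G be a graph with vertex partition V_ℓ ∪ V_f and weights w_ℓ, w_f : V → ℝ≥0. In the bilevel independent set problem with sum-type leader objective, bottleneck-type follower objective and pessimistic follower, the leader's optimal value equals max( M_ℓ, m_∅ ), where M_ℓ is the maximum of Σ_{v∈L} w_ℓ(v) over all nonempty independent sets L ⊆ V_ℓ, and m_∅ = min{ w_ℓ(v) : v ∈ argmax_{u∈V_f} w_f(u) } is the leader's value when she plays the empty set (M_ℓ = −∞ if V_ℓ is empty, m_∅ = −∞ if V_f is empty, assuming V_ℓ ∪ V_f nonempty). -/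
/-- A set of vertices is independent in `G`. -/
def IndepSet {V : Type*} (G : SimpleGraph V) (S : Set V) : Prop :=
  S.Pairwise fun u v => ¬ G.Adj u v

/-- A feasible follower reaction `F` to the leader's action `L`: it uses follower
vertices only, `L ∪ F` is independent and nonempty. -/
def FReaction {V : Type*} [DecidableEq V] (G : SimpleGraph V) (Vf : Set V)
    (L F : Finset V) : Prop :=
  ↑F ⊆ Vf ∧ IndepSet G ↑(L ∪ F) ∧ (L ∪ F).Nonempty

/-- A follower-optimal reaction for the bottleneck follower objective `w_f`. -/
def FOptReaction {V : Type*} [DecidableEq V] (G : SimpleGraph V) (Vf : Set V)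
    (wf : V → ℝ) (L F : Finset V) : Prop :=
  FReaction G Vf L F ∧ ∀ F' : Finset V, FReaction G Vf L F' →
    sInf (wf '' ↑(L ∪ F')) ≤ sInf (wf '' ↑(L ∪ F))

/-!
If the leader plays a nonempty independent `L`, the empty reaction is follower-optimal, since
adding vertices can only lower the bottleneck value; with nonnegative leader weights it is
also the worst reaction for the leader, who therefore gets `∑ v ∈ L, wl v`. If the leader
plays `∅`, a follower-optimal reaction must contain a `wf`-maximizer of `Vf`, and the singleton
of such a maximizer is optimal, so the pessimistic follower picks a `wf`-maximizer of least
`wl`-weight. The leader's optimal value is the largest of these finitely many values.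
-/

section SInfImage

variable {α β : Type*} [ConditionallyCompleteLattice β]

theorem Finset.sInf_image_le (f : α → β) (s : Finset α) {a : α} (ha : a ∈ s) :
    sInf (f '' ↑s) ≤ f a :=
  csInf_le (s.finite_toSet.image f).bddBelow ⟨a, ha, rfl⟩

theorem Finset.sInf_image_le_of_subset (f : α → β) {s t : Finset α} (hst : s ⊆ t)
    (hs : s.Nonempty) : sInf (f '' ↑t) ≤ sInf (f '' ↑s) :=
  csInf_le_csInf (t.finite_toSet.image f).bddBelow ((Finset.coe_nonempty.mpr hs).image f)
    (Set.image_mono (Finset.coe_subset.mpr hst))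

end SInfImage

theorem Set.Finite.isGreatest_csSup {β : Type*} [ConditionallyCompleteLinearOrder β]
    {s : Set β} (hfin : s.Finite) (hne : s.Nonempty) : IsGreatest s (sSup s) :=
  ⟨hne.csSup_mem hfin, fun _ hx => le_csSup hfin.bddAbove hx⟩

def IsMaxThenMin {α β γ : Type*} [Preorder β] [Preorder γ] (s : Set α) (f : α → β)
    (g : α → γ) (v : α) : Prop :=
  v ∈ s ∧ (∀ u ∈ s, f u ≤ f v) ∧ ∀ u ∈ s, (∀ u' ∈ s, f u' ≤ f u) → g v ≤ g u

theorem Set.Finite.exists_isMaxThenMin {α β γ : Type*} [LinearOrder β] [LinearOrder γ]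
    {s : Set α} (hs : s.Finite) (hne : s.Nonempty) (f : α → β) (g : α → γ) :
    ∃ v, IsMaxThenMin s f g v := by
  obtain ⟨b, hb, hbmax⟩ := Set.exists_max_image s f hs hne
  let M := {u ∈ s | ∀ u' ∈ s, f u' ≤ f u}
  obtain ⟨v, ⟨hvs, hvmax⟩, hvmin⟩ :=
    Set.exists_min_image M g (hs.subset fun _ hu => hu.1) ⟨b, hb, hbmax⟩
  exact ⟨v, hvs, hvmax, fun u hu humax => hvmin u ⟨hu, humax⟩⟩

section Bilevel

variable {V : Type*} (G : SimpleGraph V) (Vl Vf : Set V) (wl wf : V → ℝ)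

def nonemptyActionValues : Set ℝ :=
  {x | ∃ L : Finset V, ↑L ⊆ Vl ∧ L.Nonempty ∧ IndepSet G ↑L ∧ x = ∑ v ∈ L, wl v}

def emptyActionValues : Set ℝ :=
  {x | ∃ v, v ∈ Vf ∧ (∀ u ∈ Vf, wf u ≤ wf v) ∧
    (∀ u ∈ Vf, (∀ u' ∈ Vf, wf u' ≤ wf u) → wl v ≤ wl u) ∧ x = wl v}

variable {G Vl Vf wl wf}

theorem nonemptyActionValues_finite [Finite V] : (nonemptyActionValues G Vl wl).Finite :=
  (Set.finite_range fun L : Finset V => ∑ v ∈ L, wl v).subset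
    fun _ ⟨L, _, _, _, hx⟩ => ⟨L, hx.symm⟩

theorem emptyActionValues_finite [Finite V] : (emptyActionValues Vf wl wf).Finite :=
  (Set.finite_range wl).subset fun _ ⟨v, _, _, _, hx⟩ => ⟨v, hx.symm⟩

theorem union_actionValues_nonempty [Finite V] [Nonempty V] (hpart : Vl ∪ Vf = Set.univ) :
    (nonemptyActionValues G Vl wl ∪ emptyActionValues Vf wl wf).Nonempty := by
  obtain hVl | ⟨v, hv⟩ := Vl.eq_empty_or_nonempty
  · have hVf : Vf.Nonempty := by
      rw [← Set.empty_union Vf, ← hVl, hpart]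
      exact Set.univ_nonempty
    obtain ⟨v, hvVf, hvmax, hvmin⟩ := Set.toFinite Vf |>.exists_isMaxThenMin hVf wf wl
    exact ⟨wl v, Or.inr ⟨v, hvVf, hvmax, hvmin, rfl⟩⟩
  · exact ⟨wl v, Or.inl ⟨{v}, by simpa using hv, Finset.singleton_nonempty v,
      by simp [IndepSet], by simp⟩⟩

variable (G Vl Vf wl wf) [DecidableEq V]

/-- The pessimistic follower leaves the leader the least of these values. -/
def pessimisticValues (L : Finset V) : Set ℝ :=
  {y | ∃ F : Finset V, FOptReaction G Vf wf L F ∧ y = ∑ v ∈ L ∪ F, wl v}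

def leaderValues : Set ℝ :=
  {x | ∃ L : Finset V, ↑L ⊆ Vl ∧ IndepSet G ↑L ∧ (∃ F : Finset V, FReaction G Vf L F) ∧
    IsLeast (pessimisticValues G Vf wl wf L) x}

variable {G Vl Vf wl wf}

theorem fReaction_empty_right {L : Finset V} (hL : IndepSet G ↑L) (hne : L.Nonempty) :
    FReaction G Vf L ∅ :=
  ⟨by simp, by simpa using hL, by simpa using hne⟩

theorem fReaction_empty_singleton {v : V} (hv : v ∈ Vf) : FReaction G Vf ∅ {v} :=
  ⟨by simpa using hv, by simp [IndepSet], by simp⟩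

theorem isLeast_pessimisticValues_of_nonempty (hwl : ∀ v, 0 ≤ wl v) {L : Finset V}
    (hL : IndepSet G ↑L) (hne : L.Nonempty) :
    IsLeast (pessimisticValues G Vf wl wf L) (∑ v ∈ L, wl v) := by
  constructor
  · refine ⟨∅, ⟨fReaction_empty_right hL hne, fun F' _ => ?_⟩, by simp⟩
    rw [Finset.union_empty]
    exact Finset.sInf_image_le_of_subset wf Finset.subset_union_left hne
  · rintro y ⟨F, -, rfl⟩
    exact Finset.sum_le_sum_of_subset_of_nonneg Finset.subset_union_left fun v _ _ => hwl v

theorem isLeast_pessimisticValues_empty (hwl : ∀ v, 0 ≤ wl v) {v : V}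
    (hv : IsMaxThenMin Vf wf wl v) : IsLeast (pessimisticValues G Vf wl wf ∅) (wl v) := by
  obtain ⟨hvVf, hvmax, hvmin⟩ := hv
  constructor
  · refine ⟨{v}, ⟨fReaction_empty_singleton hvVf, fun F' hF' => ?_⟩, by simp⟩
    obtain ⟨u, hu⟩ := hF'.2.2
    rw [Finset.empty_union] at hu ⊢
    simpa using (Finset.sInf_image_le wf _ hu).trans (hvmax u (hF'.1 (by simpa using hu)))
  · rintro y ⟨F, ⟨hF, hFopt⟩, rfl⟩
    obtain ⟨u, hu⟩ := hF.2.2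
    rw [Finset.empty_union] at hu hFopt ⊢
    have huVf : u ∈ Vf := hF.1 hu
    have hvu : wf v ≤ wf u := by
      simpa using (hFopt {v} (fReaction_empty_singleton hvVf)).trans
        (Finset.sInf_image_le wf F hu)
    calc wl v ≤ wl u := hvmin u huVf fun u' hu' => (hvmax u' hu').trans hvu
      _ ≤ ∑ w ∈ F, wl w := Finset.single_le_sum (fun w _ => hwl w) hu

theorem leaderValues_eq [Finite V] (hwl : ∀ v, 0 ≤ wl v) :
    leaderValues G Vl Vf wl wf = nonemptyActionValues G Vl wl ∪ emptyActionValues Vf wl wf := by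
  ext x
  constructor
  · rintro ⟨L, hLVl, hL, ⟨F, hF⟩, hx⟩
    obtain rfl | hne := L.eq_empty_or_nonempty
    · obtain ⟨u, hu⟩ := hF.2.2
      obtain ⟨v, hv⟩ := Set.toFinite Vf |>.exists_isMaxThenMin ⟨u, hF.1 (by simpa using hu)⟩ wf wl
      exact Or.inr ⟨v, hv.1, hv.2.1, hv.2.2, hx.unique (isLeast_pessimisticValues_empty hwl hv)⟩
    · exact Or.inl ⟨L, hLVl, hne, hL,
        hx.unique (isLeast_pessimisticValues_of_nonempty hwl hL hne)⟩
  · rintro (⟨L, hLVl, hne, hL, rfl⟩ | ⟨v, hvVf, hvmax, hvmin, rfl⟩)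
    · exact ⟨L, hLVl, hL, ⟨∅, fReaction_empty_right hL hne⟩,
        isLeast_pessimisticValues_of_nonempty hwl hL hne⟩
    · exact ⟨∅, by simp, by simp [IndepSet], ⟨{v}, fReaction_empty_singleton hvVf⟩,
        isLeast_pessimisticValues_empty hwl ⟨hvVf, hvmax, hvmin⟩⟩

end Bilevel

theorem stmt_10_general {V : Type*} [Fintype V] [DecidableEq V] [Nonempty V]
    (G : SimpleGraph V) (Vl Vf : Set V)
    (hpart : Vl ∪ Vf = Set.univ)
    (wl wf : V → ℝ) (hwl : ∀ v, 0 ≤ wl v) :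
    IsGreatest
      {x : ℝ | ∃ L : Finset V, ↑L ⊆ Vl ∧ IndepSet G ↑L ∧
        (∃ F : Finset V, FReaction G Vf L F) ∧
        IsLeast {y : ℝ | ∃ F : Finset V, FOptReaction G Vf wf L F ∧
          y = ∑ v ∈ L ∪ F, wl v} x}
      (sSup
        ({x : ℝ | ∃ L : Finset V, ↑L ⊆ Vl ∧ L.Nonempty ∧ IndepSet G ↑L ∧
            x = ∑ v ∈ L, wl v} ∪
         {x : ℝ | ∃ v, v ∈ Vf ∧ (∀ u ∈ Vf, wf u ≤ wf v) ∧
            (∀ u ∈ Vf, (∀ u' ∈ Vf, wf u' ≤ wf u) → wl v ≤ wl u) ∧ x = wl v})) := by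
  change IsGreatest (leaderValues G Vl Vf wl wf)
    (sSup (nonemptyActionValues G Vl wl ∪ emptyActionValues Vf wl wf))
  rw [leaderValues_eq hwl]
  exact (nonemptyActionValues_finite.union emptyActionValues_finite).isGreatest_csSup
    (union_actionValues_nonempty hpart)

/-- sum leader objective, bottleneck follower objective, pessimistic
follower.  The leader's optimal value (the greatest, over feasible leader actions
`L`, of the least leader value over follower-optimal reactions) equals the maximum
of `M_ℓ` (best leader sum over nonempty independent `L ⊆ V_ℓ`) and `m_∅` (the
minimum `w_ℓ`-weight among the `w_f`-maximizers in `V_f`), expressed as the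
supremum of the union of the corresponding (possibly empty) candidate sets. -/
theorem stmt_10 {V : Type*} [Fintype V] [DecidableEq V] [Nonempty V]
    (G : SimpleGraph V) (Vl Vf : Set V)
    (hpart : Vl ∪ Vf = Set.univ) (hdis : Disjoint Vl Vf)
    (wl wf : V → ℝ) (hwl : ∀ v, 0 ≤ wl v) (hwf : ∀ v, 0 ≤ wf v) :
    IsGreatest
      {x : ℝ | ∃ L : Finset V, ↑L ⊆ Vl ∧ IndepSet G ↑L ∧
        (∃ F : Finset V, FReaction G Vf L F) ∧
        IsLeast {y : ℝ | ∃ F : Finset V, FOptReaction G Vf wf L F ∧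
          y = ∑ v ∈ L ∪ F, wl v} x}
      (sSup
        ({x : ℝ | ∃ L : Finset V, ↑L ⊆ Vl ∧ L.Nonempty ∧ IndepSet G ↑L ∧
            x = ∑ v ∈ L, wl v} ∪
         {x : ℝ | ∃ v, v ∈ Vf ∧ (∀ u ∈ Vf, wf u ≤ wf v) ∧
            (∀ u ∈ Vf, (∀ u' ∈ Vf, wf u' ≤ wf u) → wl v ≤ wl u) ∧ x = wl v})) :=
  stmt_10_general G Vl Vf hpart wl wf hwl
end

section
/- Let L and F be finite sets of pairwise-disjoint intervals on the real line such that L ∪ F is pairwise disjoint, with all intervals of L of the form [a, b), a < b. Suppose i_j ∈ L is the interval of L with the largest right endpoint among those with index ≤ k in an ordering of all intervals by non-decreasing right endpoint, and suppose all intervals of F have index ≤ k. Then F partitions as F = F₁ ∪ F₂, where every interval of F₁ ends no later than the start of i_j, and every interval of F₂ has index > j and is disjoint from i_j; moreover no interval of F₁ intersects an interval of F₂. -/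
/-- let `L` and `F` be disjoint index sets of intervals `[a i, b i)`
(indices ordered by non-decreasing right endpoints) whose union is pairwise
disjoint, let `j ∈ L` have the largest right endpoint in `L`, with all indices of
`L` and `F` at most `k`.  Then `F` splits as `F = F₁ ∪ F₂` where every interval of
`F₁` ends no later than the start of `i_j`, every interval of `F₂` has index `> j`
and is disjoint from `i_j`, and no interval of `F₁` intersects one of `F₂`. -/
theorem stmt_12 (a b : ℕ → ℝ)
    (hab : ∀ i, a i < b i)
    (hsorted : ∀ i j, i ≤ j → b i ≤ b j)
    (L F : Finset ℕ) (hLF : Disjoint L F)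
    (hdisj : ∀ i ∈ L ∪ F, ∀ i' ∈ L ∪ F, i ≠ i' →
      Disjoint (Set.Ico (a i) (b i)) (Set.Ico (a i') (b i')))
    (k j : ℕ) (hjL : j ∈ L) (hjk : j ≤ k)
    (hLk : ∀ i ∈ L, i ≤ k)
    (hjmax : ∀ i ∈ L, b i ≤ b j)
    (hFk : ∀ i ∈ F, i ≤ k) :
    ∃ F₁ F₂ : Finset ℕ, F = F₁ ∪ F₂ ∧ Disjoint F₁ F₂ ∧
      (∀ i ∈ F₁, b i ≤ a j) ∧
      (∀ i ∈ F₂, j < i ∧ Disjoint (Set.Ico (a i) (b i)) (Set.Ico (a j) (b j))) ∧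
      (∀ i ∈ F₁, ∀ i' ∈ F₂, Disjoint (Set.Ico (a i) (b i)) (Set.Ico (a i') (b i'))) := by
  classical
  have key : ∀ i ∈ F, ¬ b i ≤ a j → b j ≤ a i := by
    intro i hiF hnot
    have hij : i ≠ j := fun h => (Finset.disjoint_left.mp hLF hjL) (h ▸ hiF)
    have hd : Disjoint (Set.Ico (a i) (b i)) (Set.Ico (a j) (b j)) :=
      hdisj i (Finset.mem_union_right _ hiF) j (Finset.mem_union_left _ hjL) hij
    have hd' := (Set.Ico_disjoint_Ico).mp hd
    rcases le_max_iff.mp hd' with h | h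
    · rcases min_le_iff.mp h with h' | h'
      · linarith [hab i]
      · exact h'
    · rcases min_le_iff.mp h with h' | h'
      · exact absurd h' hnot
      · linarith [hab j]
  refine ⟨F.filter (fun i => b i ≤ a j), F.filter (fun i => ¬ b i ≤ a j),
    ?_, Finset.disjoint_filter_filter_not F F _, ?_, ?_, ?_⟩
  · exact (Finset.filter_union_filter_not_eq _ F).symm
  · intro i hi; exact (Finset.mem_filter.mp hi).2
  · intro i hi
    obtain ⟨hiF, hnot⟩ := Finset.mem_filter.mp hi
    have hij : i ≠ j := fun h => (Finset.disjoint_left.mp hLF hjL) (h ▸ hiF)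
    refine ⟨?_, hdisj i (Finset.mem_union_right _ hiF) j (Finset.mem_union_left _ hjL) hij⟩
    by_contra hle
    push_neg at hle
    have h1 : b i ≤ b j := hsorted i j hle
    have h2 := key i hiF hnot
    linarith [hab i, hab j]
  · intro i hi i' hi'
    obtain ⟨hiF, h1⟩ := Finset.mem_filter.mp hi
    obtain ⟨hi'F, h2⟩ := Finset.mem_filter.mp hi'
    have h3 := key i' hi'F h2
    refine Set.Ico_disjoint_Ico.mpr (le_max_iff.mpr (Or.inr ?_))
    have : b i ≤ a i' := by linarith [hab j]
    exact le_trans (min_le_left _ _) this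
end

section
/- Let I be a finite set of intervals partitioned into leader intervals I_ℓ and follower intervals I_f, ordered by non-decreasing right endpoints as i_1, ..., i_n, with leader weights w_ℓ and follower weights w_f. Define OPT(k) as the leader's optimal value in the bilevel interval selection problem restricted to {i_1, ..., i_k} (where both players have sum objectives and ties are resolved by the fixed follower weight function). If i_k ∈ I_ℓ, then OPT(k) = max( w_ℓ(i_k) + OPT(p(k)), OPT(k−1) ), where p(k) is the largest index j < k with b_j ≤ a_k (0 if none, OPT(0) = 0). -/
/-- The intervals `[a i, b i)`, `i ∈ S`, are pairwise disjoint. -/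
def PairwiseDisjointIntervals (a b : ℕ → ℝ) (S : Finset ℕ) : Prop :=
  ∀ i ∈ S, ∀ j ∈ S, i ≠ j → Disjoint (Set.Ico (a i) (b i)) (Set.Ico (a j) (b j))

lemma pdi_mono {a b : ℕ → ℝ} {S T : Finset ℕ} (h : S ⊆ T)
    (hT : PairwiseDisjointIntervals a b T) : PairwiseDisjointIntervals a b S :=
  fun i hi j hj hij => hT i (h hi) j (h hj) hij

/-- DP recurrence of the bilevel interval selection problem (both
players with sum objectives, follower's optimal reaction unique).  `OptReact k L F`
says `F` is the follower's optimal reaction to `L` on the horizon `{i_1, ..., i_k}`;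
`OPT k` is the leader's optimal value on that horizon.  If `i_k` is a leader
interval then `OPT k = max (w_ℓ(i_k) + OPT (p k)) (OPT (k-1))`. -/
theorem stmt_13 (n : ℕ) (a b : ℕ → ℝ) (wl wf : ℕ → ℝ)
    (hab : ∀ i, a i < b i) (hsorted : ∀ i j, i ≤ j → b i ≤ b j)
    (hwl : ∀ i, 0 ≤ wl i) (hwf : ∀ i, 0 ≤ wf i)
    (Il If : Finset ℕ) (hpart : Il ∪ If = Finset.Icc 1 n) (hdis : Disjoint Il If)
    (p : ℕ → ℕ)
    (hp_lt : ∀ k, 1 ≤ k → p k < k)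
    (hp_le : ∀ k, 1 ≤ p k → b (p k) ≤ a k)
    (hp_max : ∀ k i, 1 ≤ i → i < k → b i ≤ a k → i ≤ p k)
    (OptReact : ℕ → Finset ℕ → Finset ℕ → Prop)
    (hOptReact : ∀ k L F, OptReact k L F ↔
      (F ⊆ If ∩ Finset.Icc 1 k ∧ PairwiseDisjointIntervals a b (L ∪ F) ∧
        ∀ F' ⊆ If ∩ Finset.Icc 1 k, PairwiseDisjointIntervals a b (L ∪ F') →
          (∑ i ∈ L ∪ F', wf i) ≤ ∑ i ∈ L ∪ F, wf i))
    (hunique : ∀ k L F F', OptReact k L F → OptReact k L F' → F = F')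
    (OPT : ℕ → ℝ)
    (hOPT : ∀ k, IsGreatest
      {x : ℝ | ∃ L F : Finset ℕ, L ⊆ Il ∩ Finset.Icc 1 k ∧
        PairwiseDisjointIntervals a b L ∧ OptReact k L F ∧
        x = ∑ i ∈ L ∪ F, wl i} (OPT k))
    (hOPT0 : OPT 0 = 0)
    (k : ℕ) (hk1 : 1 ≤ k) (hkn : k ≤ n) (hkl : k ∈ Il) :
    OPT k = max (wl k + OPT (p k)) (OPT (k - 1)) := by
  classical
  have hkIf : k ∉ If := fun h => Finset.disjoint_left.mp hdis hkl h
  have hpk : p k < k := hp_lt k hk1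
  -- disjointness of earlier interval from a later one
  have hdj : ∀ i j : ℕ, b i ≤ a j →
      Disjoint (Set.Ico (a i) (b i)) (Set.Ico (a j) (b j)) := by
    intro i j h
    rw [Set.Ico_disjoint_Ico]
    exact le_trans (min_le_left _ _) (le_trans h (le_max_right _ _))
  -- overlap criterion
  have hov : ∀ i j : ℕ, a i < b j → a j < b i →
      ¬ Disjoint (Set.Ico (a i) (b i)) (Set.Ico (a j) (b j)) := by
    intro i j h1 h2 hd
    exact (Set.not_disjoint_iff.mpr ⟨max (a i) (a j),
      Set.mem_Ico.mpr ⟨le_max_left _ _, max_lt (hab i) h2⟩,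
      Set.mem_Ico.mpr ⟨le_max_right _ _, max_lt h1 (hab j)⟩⟩) hd
  -- any interval with index ≤ p k is disjoint from interval k
  have hdjk : ∀ i : ℕ, 1 ≤ i → i ≤ p k →
      Disjoint (Set.Ico (a i) (b i)) (Set.Ico (a k) (b k)) := by
    intro i h1 h2
    exact hdj i k (le_trans (hsorted i (p k) h2) (hp_le k (le_trans h1 h2)))
  -- any interval with p k < i < k overlaps interval k
  have hovk : ∀ i : ℕ, 1 ≤ i → i < k → p k < i →
      ¬ Disjoint (Set.Ico (a i) (b i)) (Set.Ico (a k) (b k)) := by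
    intro i h1 h2 h3
    have hb : a k < b i := by
      by_contra h
      exact absurd (hp_max k i h1 h2 (not_lt.mp h)) (not_le.mpr h3)
    exact hov i k (lt_of_lt_of_le (hab i) (hsorted i k (le_of_lt h2))) hb
  have hIfk : If ∩ Finset.Icc 1 k = If ∩ Finset.Icc 1 (k - 1) := by
    ext i
    simp only [Finset.mem_inter, Finset.mem_Icc]
    constructor
    · rintro ⟨hi, h1, h2⟩
      have : i ≠ k := fun h => hkIf (h ▸ hi)
      exact ⟨hi, h1, by omega⟩
    · rintro ⟨hi, h1, h2⟩
      exact ⟨hi, h1, by omega⟩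
  apply le_antisymm
  · -- OPT k ≤ max
    obtain ⟨L, F, hL, hLd, hR, hx⟩ := (hOPT k).1
    obtain ⟨hF, hLFd, hopt⟩ := (hOptReact k L F).mp hR
    by_cases hkL : k ∈ L
    · -- case k ∈ L : OPT k ≤ wl k + OPT (p k)
      set L₀ := L.erase k with hL₀def
      have hkLF : k ∈ L ∪ F := Finset.mem_union_left _ hkL
      have hsub : L₀ ∪ F ⊆ L ∪ F :=
        Finset.union_subset_union (Finset.erase_subset _ _) (le_refl _)
      have hmem : ∀ i ∈ L₀ ∪ F, 1 ≤ i ∧ i ≤ p k := by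
        intro i hi
        have hik : i ≠ k := by
          rcases Finset.mem_union.mp hi with h | h
          · exact Finset.ne_of_mem_erase h
          · exact fun he => hkIf (he ▸ (Finset.mem_inter.mp (hF h)).1)
        have hbd : 1 ≤ i ∧ i ≤ k := by
          rcases Finset.mem_union.mp (hsub hi) with h | h
          · exact Finset.mem_Icc.mp (Finset.mem_inter.mp (hL h)).2
          · exact Finset.mem_Icc.mp (Finset.mem_inter.mp (hF h)).2
        have hiklt : i < k := lt_of_le_of_ne hbd.2 hik
        refine ⟨hbd.1, ?_⟩
        by_contra h
        exact hovk i hbd.1 hiklt (not_le.mp h)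
          (hLFd i (hsub hi) k hkLF hik)
      have hkL₀F : k ∉ L₀ ∪ F := fun h => absurd (hmem k h).2 (not_le.mpr hpk)
      have hLins : L ∪ F = insert k (L₀ ∪ F) := by
        rw [← Finset.insert_union, Finset.insert_erase hkL]
      have hL₀ : L₀ ⊆ Il ∩ Finset.Icc 1 (p k) := by
        intro i hi
        have := hmem i (Finset.mem_union_left _ hi)
        exact Finset.mem_inter.mpr
          ⟨(Finset.mem_inter.mp (hL (Finset.erase_subset _ _ hi))).1,
            Finset.mem_Icc.mpr this⟩
      have hF₀ : F ⊆ If ∩ Finset.Icc 1 (p k) := by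
        intro i hi
        have := hmem i (Finset.mem_union_right _ hi)
        exact Finset.mem_inter.mpr
          ⟨(Finset.mem_inter.mp (hF hi)).1, Finset.mem_Icc.mpr this⟩
      have hR₀ : OptReact (p k) L₀ F := by
        rw [hOptReact]
        refine ⟨hF₀, pdi_mono hsub hLFd, ?_⟩
        intro F' hF' hd'
        have hF'k : F' ⊆ If ∩ Finset.Icc 1 k := by
          intro i hi
          have h := Finset.mem_inter.mp (hF' hi)
          have h2 := Finset.mem_Icc.mp h.2
          exact Finset.mem_inter.mpr ⟨h.1, Finset.mem_Icc.mpr ⟨h2.1, by omega⟩⟩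
        have hkL₀F' : k ∉ L₀ ∪ F' := by
          intro h
          rcases Finset.mem_union.mp h with h | h
          · exact absurd rfl (Finset.ne_of_mem_erase h)
          · exact hkIf (Finset.mem_inter.mp (hF' h)).1
        have hLF'ins : L ∪ F' = insert k (L₀ ∪ F') := by
          rw [← Finset.insert_union, Finset.insert_erase hkL]
        have hd'' : PairwiseDisjointIntervals a b (L ∪ F') := by
          rw [hLF'ins]
          intro i hi j hj hij
          rcases Finset.mem_insert.mp hi with heq | hi' <;>
            rcases Finset.mem_insert.mp hj with heq' | hj'
          · exact absurd (heq.trans heq'.symm) hij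
          · have h := Finset.mem_union.mp hj'
            rw [heq]
            have hb : 1 ≤ j ∧ j ≤ p k := by
              rcases h with h | h
              · exact ⟨(Finset.mem_Icc.mp
                  (Finset.mem_inter.mp (hL₀ h)).2).1,
                  (Finset.mem_Icc.mp (Finset.mem_inter.mp (hL₀ h)).2).2⟩
              · exact ⟨(Finset.mem_Icc.mp
                  (Finset.mem_inter.mp (hF' h)).2).1,
                  (Finset.mem_Icc.mp (Finset.mem_inter.mp (hF' h)).2).2⟩
            exact (hdjk j hb.1 hb.2).symm
          · rw [heq']
            have hb : 1 ≤ i ∧ i ≤ p k := by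
              rcases Finset.mem_union.mp hi' with h | h
              · exact ⟨(Finset.mem_Icc.mp
                  (Finset.mem_inter.mp (hL₀ h)).2).1,
                  (Finset.mem_Icc.mp (Finset.mem_inter.mp (hL₀ h)).2).2⟩
              · exact ⟨(Finset.mem_Icc.mp
                  (Finset.mem_inter.mp (hF' h)).2).1,
                  (Finset.mem_Icc.mp (Finset.mem_inter.mp (hF' h)).2).2⟩
            exact hdjk i hb.1 hb.2
          · exact hd' i hi' j hj' hij
        have := hopt F' hF'k hd''
        rw [hLF'ins, Finset.sum_insert hkL₀F'] at this
        rw [hLins, Finset.sum_insert hkL₀F] at this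
        linarith
      have hmemOPT : (∑ i ∈ L₀ ∪ F, wl i) ≤ OPT (p k) :=
        (hOPT (p k)).2 ⟨L₀, F, hL₀, pdi_mono (Finset.erase_subset _ _) hLd, hR₀, rfl⟩
      have : OPT k = wl k + ∑ i ∈ L₀ ∪ F, wl i := by
        rw [hx, hLins, Finset.sum_insert hkL₀F]
      rw [this]
      exact le_max_of_le_left (by linarith)
    · -- case k ∉ L : OPT k ≤ OPT (k - 1)
      have hL' : L ⊆ Il ∩ Finset.Icc 1 (k - 1) := by
        intro i hi
        have h := Finset.mem_inter.mp (hL hi)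
        have h2 := Finset.mem_Icc.mp h.2
        have : i ≠ k := fun he => hkL (he ▸ hi)
        exact Finset.mem_inter.mpr ⟨h.1, Finset.mem_Icc.mpr ⟨h2.1, by omega⟩⟩
      have hR' : OptReact (k - 1) L F := by
        rw [hOptReact, ← hIfk]
        exact ⟨hF, hLFd, hopt⟩
      have := (hOPT (k - 1)).2 ⟨L, F, hL', hLd, hR', hx⟩
      exact le_max_of_le_right this
  · -- max ≤ OPT k
    apply max_le
    · -- wl k + OPT (p k) ≤ OPT k
      obtain ⟨L, F, hL, hLd, hR, hx⟩ := (hOPT (p k)).1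
      obtain ⟨hF, hLFd, hopt⟩ := (hOptReact (p k) L F).mp hR
      have hmem : ∀ i ∈ L ∪ F, 1 ≤ i ∧ i ≤ p k := by
        intro i hi
        rcases Finset.mem_union.mp hi with h | h
        · exact Finset.mem_Icc.mp (Finset.mem_inter.mp (hL h)).2
        · exact Finset.mem_Icc.mp (Finset.mem_inter.mp (hF h)).2
      have hkLF : k ∉ L ∪ F := fun h => absurd (hmem k h).2 (not_le.mpr hpk)
      set L' := insert k L with hL'def
      have hL'sub : L' ⊆ Il ∩ Finset.Icc 1 k := by
        intro i hi
        rcases Finset.mem_insert.mp hi with rfl | hi'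
        · exact Finset.mem_inter.mpr ⟨hkl, Finset.mem_Icc.mpr ⟨hk1, le_refl _⟩⟩
        · have h := Finset.mem_inter.mp (hL hi')
          have h2 := Finset.mem_Icc.mp h.2
          exact Finset.mem_inter.mpr ⟨h.1, Finset.mem_Icc.mpr ⟨h2.1, by omega⟩⟩
      have hins : L' ∪ F = insert k (L ∪ F) := by rw [Finset.insert_union]
      have hL'Fd : PairwiseDisjointIntervals a b (L' ∪ F) := by
        rw [hins]
        intro i hi j hj hij
        rcases Finset.mem_insert.mp hi with heq | hi' <;>
          rcases Finset.mem_insert.mp hj with heq' | hj'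
        · exact absurd (heq.trans heq'.symm) hij
        · rw [heq]; exact (hdjk j (hmem j hj').1 (hmem j hj').2).symm
        · rw [heq']; exact hdjk i (hmem i hi').1 (hmem i hi').2
        · exact hLFd i hi' j hj' hij
      have hL'd : PairwiseDisjointIntervals a b L' :=
        pdi_mono Finset.subset_union_left hL'Fd
      have hR' : OptReact k L' F := by
        rw [hOptReact]
        refine ⟨fun i hi => by
          have h := Finset.mem_inter.mp (hF hi)
          have h2 := Finset.mem_Icc.mp h.2
          exact Finset.mem_inter.mpr ⟨h.1, Finset.mem_Icc.mpr ⟨h2.1, by omega⟩⟩,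
          hL'Fd, ?_⟩
        intro F' hF' hd'
        have hkF' : k ∉ F' := fun h => hkIf (Finset.mem_inter.mp (hF' h)).1
        have hF'pk : F' ⊆ If ∩ Finset.Icc 1 (p k) := by
          intro i hi
          have h := Finset.mem_inter.mp (hF' hi)
          have h2 := Finset.mem_Icc.mp h.2
          have hik : i ≠ k := fun he => hkF' (he ▸ hi)
          have hiklt : i < k := lt_of_le_of_ne h2.2 hik
          refine Finset.mem_inter.mpr ⟨h.1, Finset.mem_Icc.mpr ⟨h2.1, ?_⟩⟩
          by_contra hc
          exact hovk i h2.1 hiklt (not_le.mp hc)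
            (hd' i (Finset.mem_union_right _ hi) k
              (Finset.mem_union_left _ (Finset.mem_insert_self _ _)) hik)
        have hkLF' : k ∉ L ∪ F' := by
          intro h
          rcases Finset.mem_union.mp h with h | h
          · exact absurd (hmem k (Finset.mem_union_left _ h)).2 (not_le.mpr hpk)
          · exact hkF' h
        have hins' : L' ∪ F' = insert k (L ∪ F') := by rw [Finset.insert_union]
        have hd'' : PairwiseDisjointIntervals a b (L ∪ F') := by
          refine pdi_mono ?_ hd'
          rw [hins']
          exact Finset.subset_insert _ _
        have := hopt F' hF'pk hd''
        rw [hins', Finset.sum_insert hkLF', hins, Finset.sum_insert hkLF]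
        linarith
      have := (hOPT k).2 ⟨L', F, hL'sub, hL'd, hR', rfl⟩
      have hval : (∑ i ∈ L' ∪ F, wl i) = wl k + ∑ i ∈ L ∪ F, wl i := by
        rw [hins, Finset.sum_insert hkLF]
      rw [hval, ← hx] at this
      exact this
    · -- OPT (k - 1) ≤ OPT k
      obtain ⟨L, F, hL, hLd, hR, hx⟩ := (hOPT (k - 1)).1
      obtain ⟨hF, hLFd, hopt⟩ := (hOptReact (k - 1) L F).mp hR
      have hL' : L ⊆ Il ∩ Finset.Icc 1 k := by
        intro i hi
        have h := Finset.mem_inter.mp (hL hi)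
        have h2 := Finset.mem_Icc.mp h.2
        exact Finset.mem_inter.mpr ⟨h.1, Finset.mem_Icc.mpr ⟨h2.1, by omega⟩⟩
      have hR' : OptReact k L F := by
        rw [hOptReact, hIfk]
        exact ⟨hF, hLFd, hopt⟩
      exact (hOPT k).2 ⟨L, F, hL', hLd, hR', hx⟩
end

section
/- Let G be a graph with vertex partition V_ℓ ∪ V_f and weights w_ℓ, w_f : V → ℝ≥0. In the bilevel independent set problem with sum-type leader objective, bottleneck follower objective and optimistic follower, suppose the leader plays a nonempty independent set L with bottleneck value d = min_{v∈L} w_f(v). Then the follower's optimal reactions are exactly the maximum-w_ℓ-weight independent sets F of the induced subgraph G[S], where S = { v ∈ V_f : v ∉ N(L) and w_f(v) ≥ d }, together possibly with any such F; in particular the leader's resulting value is Σ_{v∈L} w_ℓ(v) plus the maximum w_ℓ-weight of an independent set in G[S]. -/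
/-- A follower's possible (bottleneck-optimal) reaction. -/
def FPossible {V : Type*} [DecidableEq V] (G : SimpleGraph V) (Vf : Set V)
    (wf : V → ℝ) (L F : Finset V) : Prop :=
  FReaction G Vf L F ∧ ∀ F' : Finset V, FReaction G Vf L F' →
    sInf (wf '' ↑(L ∪ F')) ≤ sInf (wf '' ↑(L ∪ F))

/-- An optimistic follower's optimal reaction: among the bottleneck-optimal
reactions it maximizes the leader's sum. -/
def FOptimistic {V : Type*} [DecidableEq V] (G : SimpleGraph V) (Vf : Set V)
    (wf wl : V → ℝ) (L F : Finset V) : Prop :=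
  FPossible G Vf wf L F ∧ ∀ F' : Finset V, FPossible G Vf wf L F' →
    (∑ v ∈ L ∪ F', wl v) ≤ ∑ v ∈ L ∪ F, wl v

/-!
The bottleneck value of any reaction is at most `d = min_{v ∈ L} w_f v`, and the empty reaction
attains it. So the bottleneck-optimal reactions are exactly those whose vertices all have
`w_f ≥ d`, i.e. the independent subsets of `S`; since `L ⊆ V_ℓ` is disjoint from every reaction,
the optimistic tie-break maximizes `Σ_{v ∈ L} w_ℓ v + Σ_{v ∈ F} w_ℓ v` over these, which is the
maximum-weight independent set problem on `G[S]`.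
-/

open Finset

section Independence

variable {V : Type*} {G : SimpleGraph V}

lemma IndepSet.union {A B : Set V} (hA : IndepSet G A) (hB : IndepSet G B)
    (hAB : ∀ a ∈ A, ∀ b ∈ B, ¬ G.Adj a b) : IndepSet G (A ∪ B) :=
  Set.pairwise_union.2
    ⟨hA, hB, fun a ha b hb _ => ⟨hAB a ha b hb, fun h => hAB a ha b hb h.symm⟩⟩

end Independence

section FinsetInf

variable {V : Type*} {f : V → ℝ} {s t : Finset V}

lemma sInf_image_le_of_mem {v : V} (hv : v ∈ s) : sInf (f '' ↑s) ≤ f v :=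
  csInf_le (s.finite_toSet.image f).bddBelow ⟨v, hv, rfl⟩

lemma le_sInf_image {d : ℝ} (hs : s.Nonempty) (h : ∀ v ∈ s, d ≤ f v) : d ≤ sInf (f '' ↑s) :=
  le_csInf (hs.to_set.image f) (Set.forall_mem_image.2 h)

lemma sInf_image_anti (hs : s.Nonempty) (hst : s ⊆ t) : sInf (f '' ↑t) ≤ sInf (f '' ↑s) :=
  csInf_le_csInf (t.finite_toSet.image f).bddBelow (hs.to_set.image f)
    (Set.image_mono (coe_subset.2 hst))

end FinsetInf

section Bilevel

variable {V : Type*} [DecidableEq V] (G : SimpleGraph V) (Vf : Set V) (wf : V → ℝ) (L : Finset V)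

/-- The set `S` of the paper. -/
def followerCandidates : Set V :=
  {v ∈ Vf | (∀ u ∈ L, ¬ G.Adj u v) ∧ sInf (wf '' ↑L) ≤ wf v}

variable {G Vf wf L} {wl : V → ℝ} {F : Finset V}
variable (hL : L.Nonempty) (hLVf : Disjoint (↑L : Set V) Vf) (hLind : IndepSet G ↑L)
include hL hLVf hLind

lemma fPossible_iff :
    FPossible G Vf wf L F ↔ ↑F ⊆ followerCandidates G Vf wf L ∧ IndepSet G ↑F := by
  constructor
  · rintro ⟨⟨hFVf, hind, -⟩, hopt⟩
    have hempty : FReaction G Vf L ∅ := ⟨by simp, by simpa using hLind, by simpa using hL⟩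
    have hd : sInf (wf '' ↑L) ≤ sInf (wf '' ↑(L ∪ F)) := by simpa using hopt ∅ hempty
    rw [coe_union] at hind
    obtain ⟨-, hFind, hLF⟩ := Set.pairwise_union.1 hind
    refine ⟨fun v hv => ⟨hFVf hv, fun u hu => ?_, ?_⟩, hFind⟩
    · have huv : u ≠ v := fun h => Set.disjoint_left.1 hLVf hu (h ▸ hFVf hv)
      exact (hLF u hu v hv huv).1
    · exact hd.trans (sInf_image_le_of_mem (mem_union_right L hv))
  · rintro ⟨hFS, hFind⟩
    refine ⟨⟨fun v hv => (hFS hv).1, ?_, hL.mono subset_union_left⟩, fun F' _ => ?_⟩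
    · rw [coe_union]
      exact hLind.union hFind fun u hu v hv => (hFS hv).2.1 u hu
    · refine (sInf_image_anti hL subset_union_left).trans
        (le_sInf_image (hL.mono subset_union_left) ?_)
      intro v hv
      rcases mem_union.1 hv with hv | hv
      · exact sInf_image_le_of_mem hv
      · exact (hFS hv).2.2

omit hL hLind in
lemma sum_union_of_subset_follower (hF : ↑F ⊆ Vf) :
    ∑ v ∈ L ∪ F, wl v = ∑ v ∈ L, wl v + ∑ v ∈ F, wl v :=
  sum_union (disjoint_coe.1 (hLVf.mono_right hF))

lemma fOptimistic_iff :
    FOptimistic G Vf wf wl L F ↔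
      ↑F ⊆ followerCandidates G Vf wf L ∧ IndepSet G ↑F ∧
        ∀ F' : Finset V, ↑F' ⊆ followerCandidates G Vf wf L → IndepSet G ↑F' →
          ∑ v ∈ F', wl v ≤ ∑ v ∈ F, wl v := by
  have hsum {F' : Finset V} (hF' : ↑F' ⊆ followerCandidates G Vf wf L) :
      ∑ v ∈ L ∪ F', wl v = ∑ v ∈ L, wl v + ∑ v ∈ F', wl v :=
    sum_union_of_subset_follower hLVf (hF'.trans fun _ hv => hv.1)
  simp only [FOptimistic, fPossible_iff hL hLVf hLind, and_imp, and_assoc]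
  refine and_congr_right fun hFS => and_congr_right fun _ => forall_congr' fun F' => ?_
  refine forall_congr' fun hF'S => forall_congr' fun _ => ?_
  rw [hsum hFS, hsum hF'S, add_le_add_iff_left]

end Bilevel

theorem stmt_17_general {V : Type*} [DecidableEq V] (G : SimpleGraph V)
    (Vl Vf : Set V) (hdis : Disjoint Vl Vf)
    (wl wf : V → ℝ)
    (L : Finset V) (hL : L.Nonempty) (hLl : ↑L ⊆ Vl)
    (hLind : IndepSet G ↑L) :
    (∀ F : Finset V,
      FOptimistic G Vf wf wl L F ↔
        (↑F ⊆ {v ∈ Vf | (∀ u ∈ L, ¬ G.Adj u v) ∧ sInf (wf '' ↑L) ≤ wf v} ∧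
          IndepSet G ↑F ∧
          ∀ F' : Finset V,
            ↑F' ⊆ {v ∈ Vf | (∀ u ∈ L, ¬ G.Adj u v) ∧ sInf (wf '' ↑L) ≤ wf v} →
            IndepSet G ↑F' → (∑ v ∈ F', wl v) ≤ ∑ v ∈ F, wl v)) ∧
    (∀ F : Finset V, FOptimistic G Vf wf wl L F →
      (∑ v ∈ L ∪ F, wl v) = (∑ v ∈ L, wl v) +
        sSup {x : ℝ | ∃ F' : Finset V,
          ↑F' ⊆ {v ∈ Vf | (∀ u ∈ L, ¬ G.Adj u v) ∧ sInf (wf '' ↑L) ≤ wf v} ∧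
          IndepSet G ↑F' ∧ x = ∑ v ∈ F', wl v}) := by
  have hLVf : Disjoint (↑L : Set V) Vf := hdis.mono_left hLl
  refine ⟨fun F => fOptimistic_iff hL hLVf hLind, fun F hF => ?_⟩
  obtain ⟨hFS, hFind, hmax⟩ := (fOptimistic_iff hL hLVf hLind).1 hF
  rw [sum_union_of_subset_follower hLVf (hFS.trans fun _ hv => hv.1)]
  congr 1
  refine (IsGreatest.csSup_eq ?_).symm
  refine ⟨⟨F, hFS, hFind, rfl⟩, ?_⟩
  rintro _ ⟨F', hF'S, hF'ind, rfl⟩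
  exact hmax F' hF'S hF'ind

/-- sum leader, bottleneck follower, optimistic.  With
`d = min_{v∈L} w_f v` and `S = {v ∈ V_f : v ∉ N(L), w_f v ≥ d}`, the follower's
optimal reactions to a nonempty independent `L ⊆ V_ℓ` are exactly the independent
subsets of `G[S]` of maximum `w_ℓ`-weight, and the leader's resulting value is
`Σ_{v∈L} w_ℓ v` plus the maximum `w_ℓ`-weight of an independent set in `G[S]`. -/
theorem stmt_17 {V : Type*} [Fintype V] [DecidableEq V] (G : SimpleGraph V)
    (Vl Vf : Set V) (hpart : Vl ∪ Vf = Set.univ) (hdis : Disjoint Vl Vf)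
    (wl wf : V → ℝ) (hwl : ∀ v, 0 ≤ wl v) (hwf : ∀ v, 0 ≤ wf v)
    (L : Finset V) (hL : L.Nonempty) (hLl : ↑L ⊆ Vl)
    (hLind : IndepSet G ↑L) :
    (∀ F : Finset V,
      FOptimistic G Vf wf wl L F ↔
        (↑F ⊆ {v ∈ Vf | (∀ u ∈ L, ¬ G.Adj u v) ∧ sInf (wf '' ↑L) ≤ wf v} ∧
          IndepSet G ↑F ∧
          ∀ F' : Finset V,
            ↑F' ⊆ {v ∈ Vf | (∀ u ∈ L, ¬ G.Adj u v) ∧ sInf (wf '' ↑L) ≤ wf v} →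
            IndepSet G ↑F' → (∑ v ∈ F', wl v) ≤ ∑ v ∈ F, wl v)) ∧
    (∀ F : Finset V, FOptimistic G Vf wf wl L F →
      (∑ v ∈ L ∪ F, wl v) = (∑ v ∈ L, wl v) +
        sSup {x : ℝ | ∃ F' : Finset V,
          ↑F' ⊆ {v ∈ Vf | (∀ u ∈ L, ¬ G.Adj u v) ∧ sInf (wf '' ↑L) ≤ wf v} ∧
          IndepSet G ↑F' ∧ x = ∑ v ∈ F', wl v}) :=
  stmt_17_general G Vl Vf hdis wl wf L hL hLl hLind
end
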